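/- (Conservation of Matching) In a unit-demand market, if some competitive equilibrium W gives buyer i a strictly positive payoff, then buyer i is matched in every competitive equilibrium of the market. Symmetrically, if some competitive equilibrium gives good j a strictly positive price, then good j is matched in every competitive equilibrium. -/

import Mathlib

attribute [local instance] Classical.propDecidable

/-- A unit-demand market: finite sets of buyers `I` and goods `J`, with utility
functions `u i j : ℝ → ℝ` that are continuous, strictly decreasing, surjective
(domain and range cover all of `ℝ`), and eventually non-positive. -/
structure Market (I J : Type) [Fintype I] [Fintype J] where
  u : I → J → ℝ → ℝ
  cont : ∀ i j, Continuous (u i j)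
  anti : ∀ i j, StrictAnti (u i j)
  surj : ∀ i j, Function.Surjective (u i j)
  evNonpos : ∀ i j, ∃ x : ℝ, ∀ y ≥ x, u i j y ≤ 0

/-- A competitive equilibrium: nonnegative prices `p`, nonnegative payoffs `w`,
and a partial matching `μ` (injective on matched buyers) such that every buyer
receives a most preferred good at the prices, unmatched buyers have payoff `0`,
and unmatched goods have price `0`. -/
def IsEquilib {I J : Type} [Fintype I] [Fintype J] (M : Market I J)
    (p : J → ℝ) (w : I → ℝ) (μ : I → Option J) : Prop :=
  (∀ i i' j, μ i = some j → μ i' = some j → i = i') ∧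
  (∀ j, 0 ≤ p j) ∧ (∀ i, 0 ≤ w i) ∧
  (∀ i j, μ i = some j → w i = M.u i j (p j)) ∧
  (∀ i j, M.u i j (p j) ≤ w i) ∧
  (∀ i, μ i = none → w i = 0) ∧
  (∀ j, (∀ i, μ i ≠ some j) → p j = 0)

/-- `W` is the lowest competitive equilibrium: its prices are componentwise
below those of every competitive equilibrium. -/
def IsLowest {I J : Type} [Fintype I] [Fintype J] (M : Market I J)
    (p : J → ℝ) (w : I → ℝ) (μ : I → Option J) : Prop :=
  IsEquilib M p w μ ∧ ∀ p' w' μ', IsEquilib M p' w' μ' → ∀ j, p j ≤ p' j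

/-- `W` is the highest competitive equilibrium: its prices are componentwise
above those of every competitive equilibrium. -/
def IsHighest {I J : Type} [Fintype I] [Fintype J] (M : Market I J)
    (p : J → ℝ) (w : I → ℝ) (μ : I → Option J) : Prop :=
  IsEquilib M p w μ ∧ ∀ p' w' μ', IsEquilib M p' w' μ' → ∀ j, p' j ≤ p j

/-- Induced payoff `u_i(p) = max({u_i^j(p^j) : j} ∪ {0})`. -/
noncomputable def inducedPayoff {I J : Type} [Fintype I] [Fintype J] (M : Market I J)
    (p : J → ℝ) (i : I) : ℝ :=
  (insert (0:ℝ) (Finset.univ.image fun j => M.u i j (p j))).max' (Finset.insert_nonempty _ _)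

/-- Induced price `p^j(u) = max({p_i^j(u_i) : i} ∪ {0})`, where `p_i^j` is the
inverse of `u_i^j`. -/
noncomputable def inducedPrice {I J : Type} [Fintype I] [Fintype J] (M : Market I J)
    (w : I → ℝ) (j : J) : ℝ :=
  (insert (0:ℝ) (Finset.univ.image fun i => Function.invFun (M.u i j) (w i))).max' (Finset.insert_nonempty _ _)

/-!
Compare two equilibria `(p, w, μ)` and `(p', w', μ')` and let `S` be the set of goods whose price
strictly rises from `p` to `p'`. Each good of `S` has positive price under `p'`, so it is sold
under `μ'`, to a buyer whose payoff strictly drops; that buyer has positive payoff under `w`, so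
under `μ` she buys a good whose price also rises. This injects `S` into itself, hence is onto:
every good of `S` is sold under `μ` to a buyer who is also matched under `μ'`. A buyer with
`0 < w i` unmatched under `μ'` (or a good with `0 < p j` unsold under `μ'`) produces a good of
`S` for which this fails.
-/

namespace IsEquilib

variable {I J : Type} [Fintype I] [Fintype J] {M : Market I J}
  {p p' : J → ℝ} {w w' : I → ℝ} {μ μ' : I → Option J}

theorem eq_of_matched (h : IsEquilib M p w μ) {i i' : I} {j : J}
    (hi : μ i = some j) (hi' : μ i' = some j) : i = i' :=
  h.1 i i' j hi hi'

theorem price_nonneg (h : IsEquilib M p w μ) (j : J) : 0 ≤ p j :=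
  h.2.1 j

theorem payoff_nonneg (h : IsEquilib M p w μ) (i : I) : 0 ≤ w i :=
  h.2.2.1 i

theorem payoff_eq_of_matched (h : IsEquilib M p w μ) {i : I} {j : J} (hij : μ i = some j) :
    w i = M.u i j (p j) :=
  h.2.2.2.1 i j hij

theorem utility_le_payoff (h : IsEquilib M p w μ) (i : I) (j : J) : M.u i j (p j) ≤ w i :=
  h.2.2.2.2.1 i j

theorem payoff_eq_zero_of_unmatched (h : IsEquilib M p w μ) {i : I} (hi : μ i = none) :
    w i = 0 :=
  h.2.2.2.2.2.1 i hi

theorem price_eq_zero_of_unsold (h : IsEquilib M p w μ) {j : J} (hj : ∀ i, μ i ≠ some j) :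
    p j = 0 :=
  h.2.2.2.2.2.2 j hj

theorem exists_matched_of_pos_price (h : IsEquilib M p w μ) {j : J} (hj : 0 < p j) :
    ∃ i, μ i = some j := by
  by_contra! hunsold
  exact hj.ne' (h.price_eq_zero_of_unsold hunsold)

theorem exists_matched_of_pos_payoff (h : IsEquilib M p w μ) {i : I} (hi : 0 < w i) :
    ∃ j, μ i = some j :=
  Option.ne_none_iff_exists'.mp fun hnone => hi.ne' (h.payoff_eq_zero_of_unmatched hnone)

theorem price_lt_of_payoff_lt (h : IsEquilib M p w μ) (h' : IsEquilib M p' w' μ')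
    {i : I} {j : J} (hij : μ i = some j) (hw : w' i < w i) : p j < p' j := by
  have : M.u i j (p' j) < M.u i j (p j) :=
    calc M.u i j (p' j) ≤ w' i := h'.utility_le_payoff i j
      _ < w i := hw
      _ = M.u i j (p j) := h.payoff_eq_of_matched hij
  exact (M.anti i j).lt_iff_gt.mp this

theorem payoff_lt_of_price_lt (h : IsEquilib M p w μ) (h' : IsEquilib M p' w' μ')
    {i : I} {j : J} (hij : μ' i = some j) (hp : p j < p' j) : w' i < w i :=
  calc w' i = M.u i j (p' j) := h'.payoff_eq_of_matched hij
    _ < M.u i j (p j) := M.anti i j hp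
    _ ≤ w i := h.utility_le_payoff i j

theorem exists_rematch_of_price_lt (h : IsEquilib M p w μ) (h' : IsEquilib M p' w' μ')
    {j : J} (hj : p j < p' j) : ∃ i k, μ' i = some j ∧ μ i = some k ∧ p k < p' k := by
  obtain ⟨i, hi'⟩ := h'.exists_matched_of_pos_price (lt_of_le_of_lt (h.price_nonneg j) hj)
  have hw : w' i < w i := payoff_lt_of_price_lt h h' hi' hj
  obtain ⟨k, hi⟩ := h.exists_matched_of_pos_payoff (lt_of_le_of_lt (h'.payoff_nonneg i) hw)
  exact ⟨i, k, hi', hi, price_lt_of_payoff_lt h h' hi hw⟩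

theorem exists_matched_in_both_of_price_lt (h : IsEquilib M p w μ)
    (h' : IsEquilib M p' w' μ') {j : J} (hj : p j < p' j) :
    ∃ i j', μ i = some j ∧ μ' i = some j' := by
  choose b k hb hk hlt using
    fun j : {j // p j < p' j} => exists_rematch_of_price_lt h h' j.2
  let f : {j // p j < p' j} → {j // p j < p' j} := fun j => ⟨k j, hlt j⟩
  have hf : f.Injective := by
    intro j₁ j₂ hf
    have hk₁ := hk j₁
    rw [show k j₁ = k j₂ from congrArg Subtype.val hf] at hk₁
    have hb₁ := hb j₁
    rw [h.eq_of_matched hk₁ (hk j₂), hb j₂] at hb₁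
    exact Subtype.ext (Option.some_inj.mp hb₁).symm
  obtain ⟨j', hj'⟩ := (Finite.injective_iff_surjective.mp hf) ⟨j, hj⟩
  refine ⟨b j', j', ?_, hb j'⟩
  rw [hk j']
  exact congrArg (some ∘ Subtype.val) hj'

end IsEquilib

/-- Conservation of matching: a buyer with strictly positive payoff in some
equilibrium is matched in every equilibrium, and a good with strictly positive
price in some equilibrium is matched in every equilibrium. -/
theorem conservation_of_matching {I J : Type} [Fintype I] [Fintype J] (M : Market I J) :
    (∀ (p : J → ℝ) (w : I → ℝ) (μ : I → Option J) (p' : J → ℝ) (w' : I → ℝ)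
        (μ' : I → Option J) (i : I),
      IsEquilib M p w μ → IsEquilib M p' w' μ' → 0 < w i → μ' i ≠ none) ∧
    (∀ (p : J → ℝ) (w : I → ℝ) (μ : I → Option J) (p' : J → ℝ) (w' : I → ℝ)
        (μ' : I → Option J) (j : J),
      IsEquilib M p w μ → IsEquilib M p' w' μ' → 0 < p j → ∃ i, μ' i = some j) := by
  constructor
  · intro p w μ p' w' μ' i h h' hwi hnone
    obtain ⟨j, hij⟩ := h.exists_matched_of_pos_payoff hwi
    have hw : w' i < w i := by rwa [h'.payoff_eq_zero_of_unmatched hnone]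
    obtain ⟨i₁, j₁, hi₁, hi₁'⟩ :=
      h.exists_matched_in_both_of_price_lt h' (h.price_lt_of_payoff_lt h' hij hw)
    rw [h.eq_of_matched hi₁ hij, hnone] at hi₁'
    exact Option.some_ne_none j₁ hi₁'.symm
  · intro p w μ p' w' μ' j h h' hpj
    by_contra! hunsold
    have hp : p' j < p j := by rwa [h'.price_eq_zero_of_unsold hunsold]
    obtain ⟨i, -, hi, -⟩ := h'.exists_matched_in_both_of_price_lt h hp
    exact hunsold i hi
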